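/- arXiv:1907.08581 — 2 statements merged into one kernel-verified Lean document; each statement's English description precedes it below -/
import Mathlib

section
/- Suppose ν and λ are cardinals with ℵ₀ < cf(ν) = ν < cf(λ) and λ regular. Then SNR⁻(λ⁺, ν, E^{λ⁺}_ν) holds: for every stationary T₀ ⊆ E^{λ⁺}_ν there is a function φ : λ⁺ → ν such that for stationarily many α ∈ T₀ there is a club in α on which φ is strictly increasing. (Assume the existence of a partial square sequence ⟨C_α | α ∈ Γ⟩ on a subset Γ of acc(λ⁺) with T₁ := {α ∈ Γ ∩ T₀ | otp(C_α) = ν} stationary, coherent in the sense that C_ᾱ = C_α ∩ ᾱ for ᾱ ∈ acc(C_α).) -/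
open Cardinal Set Ordinal

/-- `C` is unbounded in `α`. -/
def UnbIn (C : Set Ordinal) (α : Ordinal) : Prop :=
  ∀ β < α, ∃ γ ∈ C, β < γ ∧ γ < α

/-- `C` is closed in `α`: every nonzero limit point of `C` below `α` belongs to `C`. -/
def ClosedIn (C : Set Ordinal) (α : Ordinal) : Prop :=
  ∀ β < α, 0 < β → UnbIn C β → β ∈ C

/-- `C` is a club (closed unbounded) subset of `α`. -/
def ClubIn (C : Set Ordinal) (α : Ordinal) : Prop :=
  C ⊆ Set.Iio α ∧ ClosedIn C α ∧ UnbIn C α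

/-- `S` is stationary in `α`. -/
def StatIn (S : Set Ordinal) (α : Ordinal) : Prop :=
  ∀ C, ClubIn C α → (S ∩ C).Nonempty

/-- The trace of `S` below `κ`: ordinals of uncountable cofinality in which `S` reflects. -/
def Tr (κ : Ordinal) (S : Set Ordinal) : Set Ordinal :=
  {β | β < κ ∧ Cardinal.aleph0 < β.cof ∧ StatIn (S ∩ Set.Iio β) β}

/-- `E^κ_θ`, the set of ordinals below `κ` of cofinality `θ`. -/
def Ecof (κ : Ordinal) (θ : Cardinal) : Set Ordinal :=
  {α | α < κ ∧ α.cof = θ}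

/-- The set of accumulation points of `C` that belong to `C`. -/
def accSet (C : Set Ordinal) : Set Ordinal :=
  {β ∈ C | 0 < β ∧ UnbIn C β}

/-- The order type of a set of ordinals: the unique ordinal whose initial segment
order-embeds onto the set. -/
noncomputable def otp (x : Set Ordinal) : Ordinal :=
  sInf {o : Ordinal | ∃ f : Ordinal → Ordinal,
    StrictMonoOn f (Set.Iio o) ∧ f '' Set.Iio o = x}

/-- The partition principle `Prt(S, θ, T)` (computed inside `κ`). -/
def Prt (κ : Ordinal) (S : Set Ordinal) (θ : Cardinal) (T : Set Ordinal) : Prop :=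
  ∃ P : Ordinal → Set Ordinal,
    (∀ i < θ.ord, P i ⊆ S) ∧
    Set.PairwiseDisjoint (Set.Iio θ.ord) P ∧
    (S ⊆ ⋃ i ∈ Set.Iio θ.ord, P i) ∧
    StatIn (T ∩ ⋂ i ∈ Set.Iio θ.ord, Tr κ (P i)) κ

/-- The principle `SNR⁻(κ, ν, T)`. -/
def SNRm (κ : Ordinal) (ν : Cardinal) (T : Set Ordinal) : Prop :=
  ∀ T₀ ⊆ T ∩ Ecof κ ν, StatIn T₀ κ →
    ∃ φ : Ordinal → Ordinal, (∀ β < κ, φ β < ν.ord) ∧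
      StatIn {α ∈ T₀ | ∃ c, ClubIn c α ∧ StrictMonoOn φ c} κ

/-- The simultaneous partition principle `Prp(S, ν, T)` (computed inside `κ`). -/
def Prp (κ : Ordinal) (S : Set Ordinal) (ν : Cardinal) (T : Set Ordinal) : Prop :=
  ∀ θ : Cardinal, θ ≤ ν →
    ∀ Si : Ordinal → Set Ordinal, (∀ i < θ.ord, Si i ⊆ S) →
      ∀ T' ⊆ T ∩ ⋂ i ∈ Set.Iio θ.ord, Tr κ (Si i), StatIn T' κ →
        ∃ I : Set Ordinal, I ⊆ Set.Iio θ.ord ∧ (∀ j < θ.ord, ∃ i ∈ I, j ≤ i) ∧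
          ∃ S' : Ordinal → Set Ordinal,
            (∀ i ∈ I, S' i ⊆ Si i) ∧
            (∀ i ∈ I, StatIn (S' i) κ) ∧
            Set.PairwiseDisjoint I S' ∧
            StatIn (T' ∩ ⋂ i ∈ I, Tr κ (S' i)) κ

/-- `⟨lams, f⟩` is a scale for the singular cardinal `lam`. -/
def IsScale (lam : Cardinal) (lams : Ordinal → Cardinal) (f : Ordinal → Ordinal → Ordinal) : Prop :=
  (∀ i < lam.ord.cof.ord, (lams i).IsRegular) ∧
  (∀ i < lam.ord.cof.ord, ∀ j < lam.ord.cof.ord, i < j → lams i < lams j) ∧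
  (∀ i < lam.ord.cof.ord, lams i < lam) ∧
  (∀ c < lam, ∃ i < lam.ord.cof.ord, c < lams i) ∧
  (∀ γ < (Order.succ lam).ord, ∀ i < lam.ord.cof.ord, f γ i < (lams i).ord) ∧
  (∀ γ < (Order.succ lam).ord, ∀ δ < (Order.succ lam).ord, γ < δ →
    ∃ i < lam.ord.cof.ord, ∀ j, i ≤ j → j < lam.ord.cof.ord → f γ j < f δ j) ∧
  (∀ g : Ordinal → Ordinal, (∀ i < lam.ord.cof.ord, g i < (lams i).ord) →
    ∃ γ < (Order.succ lam).ord, ∃ i < lam.ord.cof.ord,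
      ∀ j, i ≤ j → j < lam.ord.cof.ord → g j < f γ j)

/-- `α` is a very good point of the scale `f`. -/
def VeryGoodAt (lam : Cardinal) (f : Ordinal → Ordinal → Ordinal) (α : Ordinal) : Prop :=
  ∃ C, ClubIn C α ∧ ∃ i < lam.ord.cof.ord,
    ∀ γ ∈ C, ∀ δ ∈ C, γ < δ → ∀ j, i ≤ j → j < lam.ord.cof.ord → f γ j < f δ j

/-- The least size of a family of `θ`-sized subsets of `ν` such that every club
in `ν` contains a member of the family. -/
noncomputable def CC (ν θ : Cardinal) : Cardinal :=
  sInf { c : Cardinal | ∃ 𝒞 : Ordinal → Set Ordinal,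
    (∀ i < c.ord, 𝒞 i ⊆ Set.Iio ν.ord ∧ (otp (𝒞 i)).card = θ) ∧
    ∀ b, ClubIn b ν.ord → ∃ i < c.ord, 𝒞 i ⊆ b }

/-- `𝒟(ν, μ) = cf([ν]^μ, ⊇)`: the least size of a family of `μ`-sized subsets of `ν`
such that every `μ`-sized subset of `ν` contains a member of the family. -/
noncomputable def DD (ν μ : Cardinal) : Cardinal :=
  sInf { c : Cardinal | ∃ 𝒟 : Ordinal → Set Ordinal,
    (∀ i < c.ord, 𝒟 i ⊆ Set.Iio ν.ord ∧ (otp (𝒟 i)).card = μ) ∧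
    ∀ a : Set Ordinal, a ⊆ Set.Iio ν.ord → (otp a).card = μ → ∃ i < c.ord, 𝒟 i ⊆ a }

/-!
Take `φ β := otp (C β)` (truncated to `0` when it is not below `ν`). For `α ∈ T₁`, coherence
makes `C β` the initial segment `C α ∩ β` for every `β ∈ acc (C α)`, so `φ β` is the position of
`β` in the increasing enumeration of `C α`, which is strictly increasing and below
`otp (C α) = ν`. Since `cf α = ν > ℵ₀`, the accumulation points of `C α` form a club in `α`.
-/

universe u

lemma exists_strictMono_image_Iio_eq {x : Set Ordinal.{u}} (hx : BddAbove x) :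
    ∃ (o : Ordinal.{u}) (f : Ordinal.{u} → Ordinal.{u}), StrictMono f ∧ f '' Iio o = x := by
  obtain ⟨b, hb⟩ := hx
  -- `enumOrd` needs an unbounded set; `x` is the part of `x ∪ Ioi b` enumerated before `succ b`
  have hs : ¬ BddAbove (x ∪ Ioi b) := fun h => not_bddAbove_Ioi b (h.mono subset_union_right)
  obtain ⟨o, ho⟩ := enumOrd_surjective hs (mem_union_right x (Order.lt_succ b))
  refine ⟨o, enumOrd (x ∪ Ioi b), enumOrd_strictMono hs, Subset.antisymm ?_ fun y hy => ?_⟩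
  · rintro _ ⟨a, ha, rfl⟩
    have hlt : enumOrd (x ∪ Ioi b) a ≤ b :=
      Order.lt_succ_iff.1 (ho ▸ enumOrd_strictMono hs ha)
    exact (enumOrd_mem hs a).resolve_right hlt.not_gt
  · obtain ⟨a, rfl⟩ := enumOrd_surjective hs (mem_union_left _ hy)
    refine ⟨a, (enumOrd_strictMono hs).lt_iff_lt.1 ?_, rfl⟩
    rw [ho]
    exact Order.lt_succ_iff.2 (hb hy)

lemma otp_eq_of_strictMonoOn {f : Ordinal → Ordinal} {o : Ordinal} {x : Set Ordinal}
    (hf : StrictMonoOn f (Iio o)) (hfx : f '' Iio o = x) : otp x = o := by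
  have hne : {o | ∃ f : Ordinal → Ordinal, StrictMonoOn f (Iio o) ∧ f '' Iio o = x}.Nonempty :=
    ⟨o, f, hf, hfx⟩
  obtain ⟨g, hg, hgx⟩ := csInf_mem hne
  have e : Iio (otp x) ≃o Iio o := (hg.orderIso g _).trans
    ((OrderIso.setCongr _ _ (hgx.trans hfx.symm)).trans (hf.orderIso f _).symm)
  simpa [type_lt_Iio] using e.toRelIsoLT.ordinalType_congr

lemma otp_inter_Iio_apply {f : Ordinal → Ordinal} {o : Ordinal} {x : Set Ordinal}
    (hf : StrictMonoOn f (Iio o)) (hfx : f '' Iio o = x) {γ : Ordinal} (hγ : γ < o) :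
    otp (x ∩ Iio (f γ)) = γ := by
  refine otp_eq_of_strictMonoOn (hf.mono fun δ hδ => lt_trans hδ hγ) ?_
  subst hfx
  ext y
  constructor
  · rintro ⟨δ, hδ, rfl⟩
    exact ⟨mem_image_of_mem f (lt_trans hδ hγ), hf (lt_trans hδ hγ) hγ hδ⟩
  · rintro ⟨⟨δ, hδ, rfl⟩, hlt⟩
    exact ⟨δ, (hf.lt_iff_lt hδ hγ).1 hlt, rfl⟩

-- `otp` can take values in any universe; it is meaningful only in the universe of its argument.
lemma otp_inter_Iio_lt {x : Set Ordinal.{u}} (hx : BddAbove x) {β : Ordinal} (hβ : β ∈ x) :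
    (otp (x ∩ Iio β) : Ordinal.{u}) < otp x := by
  obtain ⟨o, f, hf, rfl⟩ := exists_strictMono_image_Iio_eq hx
  obtain ⟨γ, hγ, rfl⟩ := hβ
  rwa [otp_inter_Iio_apply (hf.strictMonoOn _) rfl hγ,
    otp_eq_of_strictMonoOn (hf.strictMonoOn _) rfl]

lemma strictMonoOn_otp_inter_Iio {x : Set Ordinal.{u}} (hx : BddAbove x) :
    StrictMonoOn (fun β => (otp (x ∩ Iio β) : Ordinal.{u})) x := by
  obtain ⟨o, f, hf, rfl⟩ := exists_strictMono_image_Iio_eq hx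
  rintro _ ⟨γ, hγ, rfl⟩ _ ⟨δ, hδ, rfl⟩ hlt
  simp only [otp_inter_Iio_apply (hf.strictMonoOn _) rfl hγ,
    otp_inter_Iio_apply (hf.strictMonoOn _) rfl hδ]
  exact hf.lt_iff_lt.1 hlt

lemma StatIn.mono {S S' : Set Ordinal} {α : Ordinal} (hS : StatIn S α) (h : S ⊆ S') :
    StatIn S' α := fun C hC => (hS C hC).mono (inter_subset_inter_left C h)

lemma ClosedIn.accSet {C : Set Ordinal} {α : Ordinal} (hC : ClosedIn C α) :
    ClosedIn (accSet C) α := by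
  intro β hβ h0 hunb
  have hunbC : UnbIn C β := fun δ hδ =>
    let ⟨γ, hγ, hδγ, hγβ⟩ := hunb δ hδ
    ⟨γ, hγ.1, hδγ, hγβ⟩
  exact ⟨hC β hβ h0 hunbC, h0, hunbC⟩

/-- The supremum of an `ω`-sequence in `C` climbing above `β` is an accumulation point of `C`
below `α`, as `cf α > ℵ₀`. -/
lemma UnbIn.accSet {C : Set Ordinal} {α : Ordinal} (hunb : UnbIn C α) (hcl : ClosedIn C α)
    (hcof : ℵ₀ < α.cof) : UnbIn (accSet C) α := by
  intro β hβ
  set next : Ordinal → Ordinal := fun δ => sInf {γ ∈ C | δ < γ}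
  have hnext : ∀ δ < α, next δ ∈ C ∧ δ < next δ ∧ next δ < α := fun δ hδ => by
    obtain ⟨γ, hγ, hδγ, hγα⟩ := hunb δ hδ
    have hγmem : γ ∈ {γ ∈ C | δ < γ} := ⟨hγ, hδγ⟩
    exact ⟨(csInf_mem ⟨γ, hγmem⟩).1, (csInf_mem ⟨γ, hγmem⟩).2, (csInf_le' hγmem).trans_lt hγα⟩
  have hlim : nfp next β < α := nfp_lt_ord hcof (fun δ hδ => (hnext δ hδ).2.2) hβ
  have hiter : ∀ n, next^[n] β < α := fun n => (iterate_le_nfp next β n).trans_lt hlim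
  have hstep : ∀ n, next^[n + 1] β ∈ C ∧ next^[n] β < next^[n + 1] β := fun n => by
    rw [Function.iterate_succ_apply']
    exact ⟨(hnext _ (hiter n)).1, (hnext _ (hiter n)).2.1⟩
  have hβlim : β < nfp next β := (hstep 0).2.trans_le (iterate_le_nfp next β 1)
  have h0 : 0 < nfp next β := (zero_le : 0 ≤ β).trans_lt hβlim
  have hunbLim : UnbIn C (nfp next β) := fun δ hδ => by
    obtain ⟨n, hn⟩ := lt_nfp_iff.1 hδ
    exact ⟨_, (hstep n).1, hn.trans (hstep n).2,
      (hstep (n + 1)).2.trans_le (iterate_le_nfp next β (n + 2))⟩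
  exact ⟨_, ⟨hcl _ hlim h0 hunbLim, h0, hunbLim⟩, hβlim, hlim⟩

lemma ClubIn.accSet {C : Set Ordinal} {α : Ordinal} (hC : ClubIn C α) (hcof : ℵ₀ < α.cof) :
    ClubIn (accSet C) α :=
  ⟨fun _ hβ => hC.1 hβ.1, hC.2.1.accSet, hC.2.2.accSet hC.2.1 hcof⟩

theorem statement14_general (ν lam : Cardinal) (hνu : Cardinal.aleph0 < ν)
    (hsq : ∀ T₀ ⊆ Ecof (Order.succ lam).ord ν, StatIn T₀ (Order.succ lam).ord →
      ∃ Γ : Set Ordinal, ∃ C : Ordinal → Set Ordinal,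
        Γ ⊆ {α | α < (Order.succ lam).ord ∧ Order.IsSuccLimit α} ∧
        (∀ α ∈ Γ, ClubIn (C α) α) ∧
        (∀ α ∈ Γ, ∀ β ∈ accSet (C α), β ∈ Γ ∧ C β = C α ∩ Set.Iio β) ∧
        StatIn {α ∈ Γ ∩ T₀ | otp (C α) = ν.ord} (Order.succ lam).ord) :
    SNRm (Order.succ lam).ord ν (Ecof (Order.succ lam).ord ν) := by
  intro T₀ hT₀ hstat
  have hT₀E : T₀ ⊆ Ecof (Order.succ lam).ord ν := fun α hα => (hT₀ hα).2
  obtain ⟨Γ, C, -, hclub, hcoh, hT₁⟩ := hsq T₀ hT₀E hstat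
  have hν0 : 0 < ν.ord := Cardinal.ord_pos.2 (aleph0_pos.trans hνu)
  refine ⟨fun β => if otp (C β) < ν.ord then otp (C β) else 0,
    fun β _ => by dsimp only; split_ifs <;> assumption, hT₁.mono ?_⟩
  rintro α ⟨⟨hαΓ, hαT₀⟩, hotp⟩
  have hbdd : BddAbove (C α) := ⟨α, fun β hβ => ((hclub α hαΓ).1 hβ).le⟩
  refine ⟨hαT₀, accSet (C α), (hclub α hαΓ).accSet ((hT₀E hαT₀).2 ▸ hνu), ?_⟩
  refine ((strictMonoOn_otp_inter_Iio hbdd).mono fun β hβ => hβ.1).congr fun β hβ => ?_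
  have hCβ : C β = C α ∩ Iio β := (hcoh α hαΓ β hβ).2
  simp only [hCβ, if_pos (hotp ▸ otp_inter_Iio_lt hbdd hβ.1)]

theorem statement14 (ν lam : Cardinal) (hνu : Cardinal.aleph0 < ν) (hνreg : ν.IsRegular)
    (hνlam : ν < lam.ord.cof) (hlam : lam.IsRegular)
    (hsq : ∀ T₀ ⊆ Ecof (Order.succ lam).ord ν, StatIn T₀ (Order.succ lam).ord →
      ∃ Γ : Set Ordinal, ∃ C : Ordinal → Set Ordinal,
        Γ ⊆ {α | α < (Order.succ lam).ord ∧ Order.IsSuccLimit α} ∧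
        (∀ α ∈ Γ, ClubIn (C α) α) ∧
        (∀ α ∈ Γ, ∀ β ∈ accSet (C α), β ∈ Γ ∧ C β = C α ∩ Set.Iio β) ∧
        StatIn {α ∈ Γ ∩ T₀ | otp (C α) = ν.ord} (Order.succ lam).ord) :
    SNRm (Order.succ lam).ord ν (Ecof (Order.succ lam).ord ν) :=
  statement14_general ν lam hνu hsq
end

section
/- Suppose λ is a singular cardinal, f⃗ = ⟨f_β | β < λ⁺⟩ is a scale for λ in ∏_{i<cf(λ)} λ_i, ν is regular uncountable with ν ≠ cf(λ) and ν > cf(λ), S ⊆ λ⁺, and α is a good point of f⃗ with cf(α) = ν such that S ∩ α is stationary in α. Let e_α be an exact upper bound of f⃗↾α with cf(e_α(i)) = ν for all i ≥ k (where λ_k > ν). Then there exists i ∈ cf(λ) \ k such that, setting ε := e_α(i), for every γ < ε the set {β ∈ S ∩ α | γ ≤ f_β(i) < ε} is stationary in α. -/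
open Cardinal Set Ordinal

/-! Suppose every `i ∈ [k, cf λ)` had some `γᵢ < e(i)` for which the set of `β ∈ S ∩ α` with
`γᵢ ≤ f_β(i) < e(i)` is nonstationary in `α`. The function `i ↦ γᵢ` lies below `e` on a tail, so by
exactness some `f_δ`, `δ < α`, dominates it. Every `β ∈ S ∩ (δ, α)` then satisfies
`γᵢ < f_δ(i) < f_β(i) < e(i)` for all large `i`, so the stationary set `S ∩ (δ, α)` is covered by
fewer than `cf α` nonstationary sets, contradicting the `cf α`-completeness of the nonstationary
ideal. -/

universe u

section

variable {α : Ordinal.{u}} {C S : Set Ordinal.{u}}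

lemma isSuccLimit_of_aleph0_lt_cof (hα : ℵ₀ < α.cof) : Order.IsSuccLimit α :=
  one_lt_cof_iff.mp (one_lt_aleph0.trans hα)

lemma clubIn_Ioo {γ : Ordinal} (hγ : γ < α) (hα : Order.IsSuccLimit α) :
    ClubIn (Ioo γ α) α := by
  refine ⟨fun x hx => hx.2, fun β hβ hβ0 hunb => ?_, fun β hβ => ?_⟩
  · obtain ⟨δ, hδ, -, hδβ⟩ := hunb 0 hβ0
    exact ⟨hδ.1.trans hδβ, hβ⟩
  · have hsucc := hα.succ_lt (max_lt hβ hγ)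
    exact ⟨_, ⟨(le_max_right β γ).trans_lt (Order.lt_succ _), hsucc⟩,
      (le_max_left β γ).trans_lt (Order.lt_succ _), hsucc⟩

lemma ClubIn.isClub_preimage (hC : ClubIn C α) : IsClub ((↑) ⁻¹' C : Set (Iio α)) := by
  refine ⟨fun d hdC ⟨x, hxd⟩ _ a ha => ?_, fun x => ?_⟩
  · by_cases had : a ∈ d
    · exact hdC had
    have hxa : x < a := (ha.1 hxd).lt_of_ne (ne_of_mem_of_not_mem hxd had)
    refine hC.2.1 a a.2 (pos_of_gt hxa) fun δ hδ => ?_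
    obtain ⟨c, hcd, hδc, hca⟩ := ha.exists_between' had (b := ⟨δ, hδ.trans a.2⟩) hδ
    exact ⟨c, hdC hcd, hδc, hca⟩
  · obtain ⟨γ, hγC, hxγ, hγα⟩ := hC.2.2 x x.2
    exact ⟨⟨γ, hγα⟩, hγC, hxγ.le⟩

lemma IsClub.clubIn_image (hα : Order.IsSuccLimit α) {t : Set (Iio α)} (ht : IsClub t) :
    ClubIn ((↑) '' t) α := by
  refine ⟨by rintro _ ⟨x, -, rfl⟩; exact x.2, fun β hβ hβ0 hunb => ?_, fun β hβ => ?_⟩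
  · obtain ⟨_, ⟨x, hxt, rfl⟩, -, hxβ⟩ := hunb 0 hβ0
    refine ⟨⟨β, hβ⟩, ht.isLUB_mem (t := {x ∈ t | x < β}) (fun _ hx => hx.1) ⟨x, hxt, hxβ⟩
      ⟨fun y hy => hy.2.le, fun b hb => not_lt.mp fun hbβ => ?_⟩, rfl⟩
    obtain ⟨_, ⟨y, hyt, rfl⟩, hby, hyβ⟩ := hunb b hbβ
    exact (hb ⟨hyt, hyβ⟩).not_gt hby
  · obtain ⟨y, hyt, hy⟩ := ht.isCofinal ⟨Order.succ β, hα.succ_lt hβ⟩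
    exact ⟨y, ⟨y, hyt, rfl⟩, (Order.lt_succ β).trans_le hy, y.2⟩

lemma statIn_iff_isStationary (hα : Order.IsSuccLimit α) :
    StatIn S α ↔ IsStationary ((↑) ⁻¹' S : Set (Iio α)) := by
  refine ⟨fun hS t ht => ?_, fun hS C hC => ?_⟩
  · obtain ⟨_, hxS, x, hxt, rfl⟩ := hS _ (ht.clubIn_image hα)
    exact ⟨x, hxS, hxt⟩
  · obtain ⟨x, hxS, hxC⟩ := hS hC.isClub_preimage
    exact ⟨x, hxS, hxC⟩

lemma cof_Iio_ne_aleph0 (hα : ℵ₀ < α.cof) : Order.cof (Iio α) ≠ ℵ₀ := by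
  rw [cof_Iio, ← lift_cof, Ne, lift_eq_aleph0]
  exact hα.ne'

lemma StatIn.inter_clubIn (hα : ℵ₀ < α.cof) (hS : StatIn S α) (hC : ClubIn C α) :
    StatIn (S ∩ C) α := by
  rw [statIn_iff_isStationary (isSuccLimit_of_aleph0_lt_cof hα)] at hS ⊢
  intro t ht
  obtain ⟨x, hxS, hxC, hxt⟩ := hS (hC.isClub_preimage.inter (cof_Iio_ne_aleph0 hα) ht)
  exact ⟨x, ⟨hxS, hxC⟩, hxt⟩

lemma StatIn.exists_statIn_of_subset_biUnion {o : Ordinal.{u}} {I : Set Ordinal.{u}}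
    {N : Ordinal.{u} → Set Ordinal.{u}} (hα : ℵ₀ < α.cof) (ho : o.card < α.cof) (hI : I ⊆ Iio o)
    (hS : StatIn S α) (hSN : S ⊆ ⋃ i ∈ I, N i) : ∃ i ∈ I, StatIn (N i) α := by
  simp_rw [statIn_iff_isStationary (isSuccLimit_of_aleph0_lt_cof hα)] at hS ⊢
  have hI : Cardinal.lift.{u + 1} #I < Cardinal.lift.{u + 1} (Order.cof (Iio α)) := by
    rw [Cardinal.lift_id, Cardinal.lift_id, cof_Iio, ← lift_cof]
    calc #I ≤ #(Iio o) := mk_le_mk_of_subset hI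
      _ = Cardinal.lift o.card := Cardinal.mk_Iio_ordinal o
      _ < Cardinal.lift α.cof := lift_lt.mpr ho
  obtain ⟨⟨i, hi⟩, hN⟩ := (isStationary_iUnion_iff (f := fun i : I => ((↑) ⁻¹' N i : Set (Iio α)))
    (cof_Iio_ne_aleph0 hα) hI).mp (hS.mono fun x hx => by simpa using hSN hx)
  exact ⟨i, hi, hN⟩

end

theorem statement15_general (lam : Cardinal)
    (lams : Ordinal → Cardinal) (f : Ordinal → Ordinal → Ordinal)
    (hscale : IsScale lam lams f)
    (ν : Cardinal) (hνu : Cardinal.aleph0 < ν)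
    (hcf : lam.ord.cof < ν)
    (S : Set Ordinal)
    (α : Ordinal) (hα : α < (Order.succ lam).ord) (hαcof : α.cof = ν)
    (hSstat : StatIn (S ∩ Set.Iio α) α)
    (k : Ordinal) (hk : k < lam.ord.cof.ord)
    (e : Ordinal → Ordinal)
    (heprod : ∀ i < lam.ord.cof.ord, e i < (lams i).ord)
    (hub : ∀ γ < α, ∃ i < lam.ord.cof.ord, ∀ j, i ≤ j → j < lam.ord.cof.ord → f γ j < e j)
    (hexact : ∀ g : Ordinal → Ordinal, (∀ i < lam.ord.cof.ord, g i < (lams i).ord) →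
      (∃ i < lam.ord.cof.ord, ∀ j, i ≤ j → j < lam.ord.cof.ord → g j < e j) →
      ∃ γ < α, ∃ i < lam.ord.cof.ord, ∀ j, i ≤ j → j < lam.ord.cof.ord → g j < f γ j) :
    ∃ i, k ≤ i ∧ i < lam.ord.cof.ord ∧
      ∀ γ < e i, StatIn ({β ∈ S | γ ≤ f β i ∧ f β i < e i} ∩ Set.Iio α) α := by
  obtain ⟨-, -, -, -, -, hincr, -⟩ := hscale
  have hαω : ℵ₀ < α.cof := hαcof ▸ hνu
  by_contra! hbad
  choose! γ hγe hγ using hbad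
  let g i := if k ≤ i then γ i else e i
  have hgprod : ∀ i < lam.ord.cof.ord, g i < (lams i).ord := fun i hi => by
    by_cases hki : k ≤ i
    · simpa only [g, if_pos hki] using (hγe i hki hi).trans (heprod i hi)
    · simpa only [g, if_neg hki] using heprod i hi
  obtain ⟨δ, hδα, i₀, hi₀, hgδ⟩ := hexact g hgprod
    ⟨k, hk, fun j hkj hj => by simpa only [g, if_pos hkj] using hγe j hkj hj⟩
  have hcover : S ∩ Iio α ∩ Ioo δ α ⊆
      ⋃ i ∈ Ico k lam.ord.cof.ord, {β ∈ S | γ i ≤ f β i ∧ f β i < e i} ∩ Iio α := by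
    rintro β ⟨⟨hβS, hβα⟩, hδβ, -⟩
    obtain ⟨i₁, hi₁, hfδβ⟩ := hincr δ (hδα.trans hα) β (hβα.trans hα) hδβ
    obtain ⟨i₂, hi₂, hfβe⟩ := hub β hβα
    set j := max (max i₀ i₁) (max i₂ k)
    have hj : j < lam.ord.cof.ord := max_lt (max_lt hi₀ hi₁) (max_lt hi₂ hk)
    have hkj : k ≤ j := by simp [j]
    have hγj : γ j < f δ j := by simpa only [g, if_pos hkj] using hgδ j (by simp [j]) hj
    exact mem_biUnion ⟨hkj, hj⟩
      ⟨⟨hβS, (hγj.trans (hfδβ j (by simp [j]) hj)).le, hfβe j (by simp [j]) hj⟩, hβα⟩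
  obtain ⟨i, ⟨hki, hi⟩, hstat⟩ :=
    (hSstat.inter_clubIn hαω (clubIn_Ioo hδα (isSuccLimit_of_aleph0_lt_cof hαω)))
      |>.exists_statIn_of_subset_biUnion hαω (by rwa [card_ord, hαcof]) (fun _ hi => hi.2) hcover
  exact hγ i hki hi hstat

theorem statement15 (lam : Cardinal) (hlam : Cardinal.aleph0 ≤ lam) (hsing : ¬lam.IsRegular)
    (lams : Ordinal → Cardinal) (f : Ordinal → Ordinal → Ordinal)
    (hscale : IsScale lam lams f)
    (ν : Cardinal) (hν : ν.IsRegular) (hνu : Cardinal.aleph0 < ν)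
    (hcf : lam.ord.cof < ν)
    (S : Set Ordinal) (hS : S ⊆ Set.Iio (Order.succ lam).ord)
    (α : Ordinal) (hα : α < (Order.succ lam).ord) (hαcof : α.cof = ν)
    (hSstat : StatIn (S ∩ Set.Iio α) α)
    (k : Ordinal) (hk : k < lam.ord.cof.ord) (hkν : ν < lams k)
    (e : Ordinal → Ordinal)
    (heprod : ∀ i < lam.ord.cof.ord, e i < (lams i).ord)
    (hecof : ∀ i, k ≤ i → i < lam.ord.cof.ord → (e i).cof = ν)
    (hub : ∀ γ < α, ∃ i < lam.ord.cof.ord, ∀ j, i ≤ j → j < lam.ord.cof.ord → f γ j < e j)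
    (hexact : ∀ g : Ordinal → Ordinal, (∀ i < lam.ord.cof.ord, g i < (lams i).ord) →
      (∃ i < lam.ord.cof.ord, ∀ j, i ≤ j → j < lam.ord.cof.ord → g j < e j) →
      ∃ γ < α, ∃ i < lam.ord.cof.ord, ∀ j, i ≤ j → j < lam.ord.cof.ord → g j < f γ j) :
    ∃ i, k ≤ i ∧ i < lam.ord.cof.ord ∧
      ∀ γ < e i, StatIn ({β ∈ S | γ ≤ f β i ∧ f β i < e i} ∩ Set.Iio α) α :=
  statement15_general lam lams f hscale ν hνu hcf S α hα hαcof hSstat k hk e heprod hub hexact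
end
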